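/- Let λ be a partition with p-quotient (μ(0), ..., μ(p-1)), where μ(i) is a partition of c_i and c_0 + ... + c_{p-1} = w. Then ∏_{α∈λ}[h_α]_p = p^w ∏_{i=0}^{p-1} [c_i!/dim S^{μ(i)}]_p, where [·]_p denotes the p-part. -/
import Mathlib

open scoped Nat

/-- The cells (i, j) of the Young diagram of a partition `lam` with `k` rows. -/
def cellsOf (lam : ℕ → ℕ) (k : ℕ) : Finset (ℕ × ℕ) :=
  (Finset.range k).biUnion (fun i => ({i} : Finset ℕ) ×ˢ Finset.range (lam i))

/-- The `j`-th part of the conjugate partition of `lam` (which has `k` rows). -/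
def conjPart (lam : ℕ → ℕ) (k j : ℕ) : ℕ :=
  ((Finset.range k).filter (fun i => j < lam i)).card

/-- The hook length of the cell `q = (i, j)`. -/
def hookLen (lam : ℕ → ℕ) (k : ℕ) (q : ℕ × ℕ) : ℕ :=
  (lam q.1 - q.2) + (conjPart lam k q.2 - q.1) - 1

/-- The product of all hook lengths of `lam`. -/
def hookProd (lam : ℕ → ℕ) (k : ℕ) : ℕ :=
  ∏ q ∈ cellsOf lam k, hookLen lam k q

/-- `dim S^lam` for `lam` a partition of `n`, by the hook length formula. -/
def dimSpecht (lam : ℕ → ℕ) (k n : ℕ) : ℕ := n.factorial / hookProd lam k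

/-- `[m]_p`: the largest power of `p` dividing `m`. -/
def ppart (p m : ℕ) : ℕ := p ^ (m.factorization p)

def betaSt (lam : ℕ → ℕ) (k i : ℕ) : ℕ := lam i + (k - 1 - i)

lemma mem_cellsOf {lam : ℕ → ℕ} {k : ℕ} {q : ℕ × ℕ} :
    q ∈ cellsOf lam k ↔ q.1 < k ∧ q.2 < lam q.1 := by
  rcases q with ⟨i, j⟩
  simp only [cellsOf, Finset.mem_biUnion, Finset.mem_product, Finset.mem_singleton,
    Finset.mem_range]
  constructor
  · rintro ⟨a, ha, h1, h2⟩
    subst h1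
    exact ⟨ha, h2⟩
  · rintro ⟨h1, h2⟩
    exact ⟨i, h1, rfl, h2⟩

lemma conjPart_le_k (lam : ℕ → ℕ) (k j : ℕ) : conjPart lam k j ≤ k :=
  le_trans (Finset.card_filter_le _ _) (by simp)

lemma conjPart_anti (lam : ℕ → ℕ) (k : ℕ) {j j' : ℕ} (h : j ≤ j') :
    conjPart lam k j' ≤ conjPart lam k j := by
  apply Finset.card_le_card
  intro x hx
  simp only [Finset.mem_filter] at hx ⊢
  exact ⟨hx.1, lt_of_le_of_lt h hx.2⟩

lemma conjPart_ge {lam : ℕ → ℕ} {k : ℕ} (hanti : ∀ i j, i ≤ j → lam j ≤ lam i) {i j : ℕ}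
    (hik : i < k) (hj : j < lam i) : i + 1 ≤ conjPart lam k j := by
  have hsub : Finset.range (i + 1) ⊆ (Finset.range k).filter (fun i' => j < lam i') := by
    intro x hx
    simp only [Finset.mem_range] at hx
    simp only [Finset.mem_filter, Finset.mem_range]
    exact ⟨by omega, lt_of_lt_of_le hj (hanti x i (by omega))⟩
  simpa [conjPart] using Finset.card_le_card hsub

lemma conjPart_le {lam : ℕ → ℕ} {k : ℕ} (hanti : ∀ i j, i ≤ j → lam j ≤ lam i) {i j : ℕ}
    (h : lam i ≤ j) : conjPart lam k j ≤ i := by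
  have hsub : (Finset.range k).filter (fun i' => j < lam i') ⊆ Finset.range i := by
    intro x hx
    simp only [Finset.mem_filter, Finset.mem_range] at hx
    simp only [Finset.mem_range]
    by_contra hxi
    push_neg at hxi
    have := hanti i x hxi
    omega
  simpa [conjPart] using Finset.card_le_card hsub

lemma hookLen_eq {lam : ℕ → ℕ} {k i j : ℕ} (hanti : ∀ i j, i ≤ j → lam j ≤ lam i)
    (hik : i < k) (hj : j < lam i) :
    hookLen lam k (i, j) = betaSt lam k i - (j + (k - conjPart lam k j)) := by
  have h1 := conjPart_ge hanti hik hj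
  have h2 := conjPart_le_k lam k j
  show (lam i - j) + (conjPart lam k j - i) - 1 = _
  simp only [betaSt]
  omega

lemma g_lt {lam : ℕ → ℕ} {k i j : ℕ} (hanti : ∀ i j, i ≤ j → lam j ≤ lam i)
    (hik : i < k) (hj : j < lam i) :
    j + (k - conjPart lam k j) < betaSt lam k i := by
  have h1 := conjPart_ge hanti hik hj
  have h2 := conjPart_le_k lam k j
  simp only [betaSt]
  omega

lemma g_strictMono (lam : ℕ → ℕ) (k : ℕ) :
    StrictMono (fun j => j + (k - conjPart lam k j)) := by
  intro a b hab
  have h1 := conjPart_anti lam k (le_of_lt hab)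
  have h2 := conjPart_le_k lam k a
  simp only
  omega

lemma betaSt_lt {lam : ℕ → ℕ} {k : ℕ} (hanti : ∀ i j, i ≤ j → lam j ≤ lam i) {i i' : ℕ}
    (h : i < i') (h' : i' < k) : betaSt lam k i' < betaSt lam k i := by
  have := hanti i i' (le_of_lt h)
  simp only [betaSt]
  omega

lemma hook_ne_zero {lam : ℕ → ℕ} {k : ℕ} (hanti : ∀ i j, i ≤ j → lam j ≤ lam i)
    {q : ℕ × ℕ} (hq : q ∈ cellsOf lam k) : hookLen lam k q ≠ 0 := by
  obtain ⟨h1, h2⟩ := mem_cellsOf.mp hq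
  have h3 := conjPart_ge hanti h1 h2
  show (lam q.1 - q.2) + (conjPart lam k q.2 - q.1) - 1 ≠ 0
  omega

lemma prod_add_one_range (n : ℕ) : ∏ t ∈ Finset.range n, (t + 1) = n ! := by
  induction n with
  | zero => simp
  | succ m ih => rw [Finset.prod_range_succ, ih, Nat.factorial_succ]; ring

lemma prod_sub_range (n : ℕ) : ∏ t ∈ Finset.range n, (n - t) = n ! := by
  rw [← Finset.prod_range_reflect, ← prod_add_one_range n]
  apply Finset.prod_congr rfl
  intro j hj
  rw [Finset.mem_range] at hj
  omega

lemma row_prod {lam : ℕ → ℕ} {k : ℕ} (hanti : ∀ i j, i ≤ j → lam j ≤ lam i) {i : ℕ}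
    (hik : i < k) :
    (∏ j ∈ Finset.range (lam i), hookLen lam k (i, j)) *
      (∏ i' ∈ Finset.Ioo i k, (betaSt lam k i - betaSt lam k i')) =
    (betaSt lam k i)! := by
  classical
  set g : ℕ → ℕ := fun j => j + (k - conjPart lam k j) with hg
  set A := (Finset.range (lam i)).image g with hA
  set B := (Finset.Ioo i k).image (betaSt lam k) with hB
  have hginj : Function.Injective g := (g_strictMono lam k).injective
  have hbinj : Set.InjOn (betaSt lam k) (Finset.Ioo i k) := by
    intro a ha b hb hab
    simp only [Finset.coe_Ioo, Set.mem_Ioo] at ha hb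
    rcases lt_trichotomy a b with h | h | h
    · exact absurd hab (Nat.ne_of_lt' (betaSt_lt hanti h hb.2))
    · exact h
    · exact absurd hab (Nat.ne_of_gt (betaSt_lt hanti h ha.2)).symm
  have hAcard : A.card = lam i := by
    rw [hA, Finset.card_image_of_injective _ hginj, Finset.card_range]
  have hBcard : B.card = k - i - 1 := by
    rw [hB, Finset.card_image_of_injOn hbinj, Nat.card_Ioo]
  have hAsub : A ⊆ Finset.range (betaSt lam k i) := by
    intro x hx
    rw [hA, Finset.mem_image] at hx
    obtain ⟨j, hj, rfl⟩ := hx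
    exact Finset.mem_range.mpr (g_lt hanti hik (Finset.mem_range.mp hj))
  have hBsub : B ⊆ Finset.range (betaSt lam k i) := by
    intro x hx
    rw [hB, Finset.mem_image] at hx
    obtain ⟨i', hi', rfl⟩ := hx
    rw [Finset.mem_Ioo] at hi'
    exact Finset.mem_range.mpr (betaSt_lt hanti hi'.1 hi'.2)
  have hdisj : Disjoint A B := by
    rw [Finset.disjoint_left]
    intro x hxA hxB
    rw [hA, Finset.mem_image] at hxA
    rw [hB, Finset.mem_image] at hxB
    obtain ⟨j, hj, rfl⟩ := hxA
    obtain ⟨i', hi', heq⟩ := hxB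
    rw [Finset.mem_Ioo] at hi'
    rw [Finset.mem_range] at hj
    rcases lt_or_ge j (lam i') with hcase | hcase
    · have h1 := conjPart_ge hanti hi'.2 hcase
      have h2 := conjPart_le_k lam k j
      simp only [hg, betaSt] at heq
      omega
    · have h1 := conjPart_le (k := k) hanti hcase
      simp only [hg, betaSt] at heq
      omega
  have hunion : A ∪ B = Finset.range (betaSt lam k i) := by
    apply Finset.eq_of_subset_of_card_le (Finset.union_subset hAsub hBsub)
    rw [Finset.card_range, Finset.card_union_of_disjoint hdisj, hAcard, hBcard]
    simp only [betaSt]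
    omega
  have hfact : (betaSt lam k i)! = ∏ t ∈ A ∪ B, (betaSt lam k i - t) := by
    rw [hunion, prod_sub_range]
  rw [hfact, Finset.prod_union hdisj, hA, hB,
    Finset.prod_image (fun a _ b _ h => hginj h),
    Finset.prod_image (fun a ha b hb h => hbinj ha hb h)]
  congr 1
  apply Finset.prod_congr rfl
  intro j hj
  rw [hookLen_eq hanti hik (Finset.mem_range.mp hj)]

lemma cells_pairwise_disjoint (lam : ℕ → ℕ) (k : ℕ) : ∀ a ∈ Finset.range k, ∀ b ∈ Finset.range k,
    a ≠ b → Disjoint (({a} : Finset ℕ) ×ˢ Finset.range (lam a))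
      (({b} : Finset ℕ) ×ˢ Finset.range (lam b)) := by
  intro a _ b _ hab
  rw [Finset.disjoint_left]
  intro q hq hq'
  simp only [Finset.mem_product, Finset.mem_singleton] at hq hq'
  exact hab (hq.1 ▸ hq'.1 ▸ rfl)

lemma prod_cellsOf (lam : ℕ → ℕ) (k : ℕ) {M : Type*} [CommMonoid M] (f : ℕ × ℕ → M) :
    ∏ q ∈ cellsOf lam k, f q = ∏ i ∈ Finset.range k, ∏ j ∈ Finset.range (lam i), f (i, j) := by
  rw [cellsOf, Finset.prod_biUnion (cells_pairwise_disjoint lam k)]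
  apply Finset.prod_congr rfl
  intro i _
  rw [Finset.singleton_product, Finset.prod_map]
  rfl

lemma card_cellsOf (lam : ℕ → ℕ) (k : ℕ) :
    (cellsOf lam k).card = ∑ i ∈ Finset.range k, lam i := by
  rw [cellsOf, Finset.card_biUnion (cells_pairwise_disjoint lam k)]
  apply Finset.sum_congr rfl
  intro i _
  simp [Finset.card_product]


lemma prod_Ioi_fin {m : ℕ} {M : Type*} [CommMonoid M] (i : Fin m) (g : ℕ → M) :
    ∏ j ∈ Finset.Ioi i, g (j : ℕ) = ∏ j ∈ Finset.Ioo (i : ℕ) m, g j := by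
  have himg : (Finset.Ioi i).image (fun j : Fin m => (j : ℕ)) = Finset.Ioo (i : ℕ) m := by
    ext x
    simp only [Finset.mem_image, Finset.mem_Ioi, Finset.mem_Ioo, Fin.lt_def]
    constructor
    · rintro ⟨j, hj, rfl⟩
      exact ⟨hj, j.isLt⟩
    · rintro ⟨h1, h2⟩
      exact ⟨⟨x, h2⟩, h1, rfl⟩
  rw [← himg, Finset.prod_image (fun a _ b _ h => Fin.val_injective h)]

lemma factorial_prod_dvd_aux {m n : ℕ} (b : ℕ → ℕ)
    (hdec : ∀ i j, i < j → j < m → b j < b i)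
    (hsum : ∑ i ∈ Finset.range m, b i = n + ∑ i ∈ Finset.range m, i) :
    (∏ i ∈ Finset.range m, (b i)!) ∣
      n ! * ∏ i ∈ Finset.range m, ∏ j ∈ Finset.Ioo i m, (b i - b j) := by
  classical
  set F : ℕ := ∏ i ∈ Finset.range m, (b i)! with hF
  set W : ℕ := ∏ i ∈ Finset.range m, ∏ j ∈ Finset.Ioo i m, (b i - b j) with hW
  set D : Matrix (Fin m) (Fin m) ℤ :=
    Matrix.of (fun i j : Fin m => ((descPochhammer ℤ (j : ℕ)).eval ((b (i : ℕ) : ℤ)))) with hD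
  have key : (F : ℤ) ∣ (n ! : ℤ) * D.det := by
    rw [Matrix.det_apply', Finset.mul_sum]
    apply Finset.dvd_sum
    intro σ _
    have hDF : ∀ i : Fin m, D (σ i) i = ((b ((σ i : Fin m) : ℕ)).descFactorial (i : ℕ) : ℤ) :=
      fun i => descPochhammer_eval_eq_descFactorial ℤ _ _
    have hnat : F ∣ n ! * ∏ i : Fin m, (b ((σ i : Fin m) : ℕ)).descFactorial (i : ℕ) := by
      by_cases hcase : ∀ i : Fin m, (i : ℕ) ≤ b ((σ i : Fin m) : ℕ)
      · have hsum' : ∑ i : Fin m, (b ((σ i : Fin m) : ℕ) - (i : ℕ)) = n := by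
          have h1 : ∑ i : Fin m, (b ((σ i : Fin m) : ℕ) - (i : ℕ)) + ∑ i : Fin m, (i : ℕ)
              = ∑ i : Fin m, b ((σ i : Fin m) : ℕ) := by
            rw [← Finset.sum_add_distrib]
            apply Finset.sum_congr rfl
            intro i _
            have := hcase i
            omega
          have h2 : ∑ i : Fin m, b ((σ i : Fin m) : ℕ) = ∑ i : Fin m, b (i : ℕ) :=
            Equiv.sum_comp σ (fun i : Fin m => b (i : ℕ))
          have h3 : ∑ i : Fin m, b (i : ℕ) = ∑ i ∈ Finset.range m, b i :=
            Fin.sum_univ_eq_sum_range _ _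
          have h4 : ∑ i : Fin m, (i : ℕ) = ∑ i ∈ Finset.range m, i :=
            Fin.sum_univ_eq_sum_range (fun i => i) m
          omega
        have hdvd : (∏ i : Fin m, (b ((σ i : Fin m) : ℕ) - (i : ℕ))!) ∣ n ! := by
          rw [← hsum']
          exact Nat.prod_factorial_dvd_factorial_sum _ _
        obtain ⟨t, ht⟩ := hdvd
        have hFeq : F = ∏ i : Fin m, (b ((σ i : Fin m) : ℕ))! := by
          rw [hF, ← Fin.prod_univ_eq_prod_range (fun i => (b i)!) m]
          exact (Equiv.prod_comp σ (fun i : Fin m => (b (i : ℕ))!)).symm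
        refine ⟨t, ?_⟩
        have hmul : ∏ i : Fin m, (b ((σ i : Fin m) : ℕ))!
            = (∏ i : Fin m, (b ((σ i : Fin m) : ℕ) - (i : ℕ))!)
              * ∏ i : Fin m, (b ((σ i : Fin m) : ℕ)).descFactorial (i : ℕ) := by
          rw [← Finset.prod_mul_distrib]
          exact Finset.prod_congr rfl fun i _ =>
            (Nat.factorial_mul_descFactorial (hcase i)).symm
        rw [ht, hFeq, hmul]
        ring
      · push_neg at hcase
        obtain ⟨i0, hi0⟩ := hcase
        rw [Finset.prod_eq_zero (Finset.mem_univ i0)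
          (Nat.descFactorial_eq_zero_iff_lt.mpr hi0), mul_zero]
        exact dvd_zero F
    rw [mul_left_comm]
    apply Dvd.dvd.mul_left
    have hcast : (n ! : ℤ) * ∏ i : Fin m, D (σ i) i
        = ((n ! * ∏ i : Fin m, (b ((σ i : Fin m) : ℕ)).descFactorial (i : ℕ) : ℕ) : ℤ) := by
      push_cast
      congr 1
      exact Finset.prod_congr rfl fun i _ => hDF i
    rw [hcast]
    exact Int.natCast_dvd_natCast.mpr hnat
  have hvdm : (Matrix.vandermonde (fun i : Fin m => (b (i : ℕ) : ℤ))).det = D.det :=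
    Matrix.det_eval_matrixOfPolynomials_eq_det_vandermonde _ _
      (fun i => descPochhammer_natDegree ℤ (i : ℕ)) (fun i => monic_descPochhammer ℤ _)
  rw [Matrix.det_vandermonde] at hvdm
  set e : ℤ := ∏ i : Fin m, (-1 : ℤ) ^ (Finset.Ioi i).card with he
  have hWcast : (W : ℤ)
      = ∏ i : Fin m, ∏ j ∈ Finset.Ioi i, ((b (i : ℕ) : ℤ) - (b ((j : Fin m) : ℕ) : ℤ)) := by
    rw [hW]
    push_cast
    rw [← Fin.prod_univ_eq_prod_range
      (fun i => ∏ j ∈ Finset.Ioo i m, ((b i - b j : ℕ) : ℤ)) m]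
    apply Finset.prod_congr rfl
    intro i _
    rw [← prod_Ioi_fin i (fun j => ((b (i : ℕ) - b j : ℕ) : ℤ))]
    apply Finset.prod_congr rfl
    intro j hj
    have hji : (i : ℕ) < (j : ℕ) := Fin.lt_def.mp (Finset.mem_Ioi.mp hj)
    have hlt := hdec (i : ℕ) (j : ℕ) hji j.isLt
    rw [Nat.cast_sub (le_of_lt hlt)]
  have hdet : D.det = e * (W : ℤ) := by
    rw [← hvdm, hWcast, he, ← Finset.prod_mul_distrib]
    apply Finset.prod_congr rfl
    intro i _
    rw [← Finset.prod_const, ← Finset.prod_mul_distrib]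
    apply Finset.prod_congr rfl
    intro j _
    ring
  have he2 : e * e = 1 := by
    rw [he, ← Finset.prod_mul_distrib]
    apply Finset.prod_eq_one
    intro i _
    rw [← pow_add]
    exact Even.neg_one_pow ⟨(Finset.Ioi i).card, by ring⟩
  have final : (F : ℤ) ∣ ((n ! * W : ℕ) : ℤ) := by
    rw [hdet] at key
    have h5 : e * ((n ! : ℤ) * (e * (W : ℤ))) = ((n ! * W : ℕ) : ℤ) := by
      push_cast
      calc e * ((n ! : ℤ) * (e * (W : ℤ))) = (e * e) * ((n ! : ℤ) * (W : ℤ)) := by ring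
        _ = (n ! : ℤ) * (W : ℤ) := by rw [he2, one_mul]
    rw [← h5]
    exact key.mul_left e
  exact_mod_cast Int.natCast_dvd_natCast.mp final

lemma hookProd_dvd_factorial {lam : ℕ → ℕ} {k : ℕ} (hanti : ∀ i j, i ≤ j → lam j ≤ lam i) :
    hookProd lam k ∣ (∑ i ∈ Finset.range k, lam i)! := by
  set n := ∑ i ∈ Finset.range k, lam i with hn
  set W : ℕ := ∏ i ∈ Finset.range k, ∏ j ∈ Finset.Ioo i k, (betaSt lam k i - betaSt lam k j)
    with hW
  have hdec : ∀ i j, i < j → j < k → betaSt lam k j < betaSt lam k i :=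
    fun i j h h' => betaSt_lt hanti h h'
  have hsum : ∑ i ∈ Finset.range k, betaSt lam k i = n + ∑ i ∈ Finset.range k, i := by
    simp only [betaSt]
    rw [Finset.sum_add_distrib, hn]
    congr 1
    exact Finset.sum_range_reflect (fun i => i) k
  have hC := factorial_prod_dvd_aux (betaSt lam k) hdec hsum
  have hrow : hookProd lam k * W = ∏ i ∈ Finset.range k, (betaSt lam k i)! := by
    rw [hookProd, prod_cellsOf, hW, ← Finset.prod_mul_distrib]
    exact Finset.prod_congr rfl fun i hi => row_prod hanti (Finset.mem_range.mp hi)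
  have hWpos : 0 < W := by
    rw [hW]
    apply Finset.prod_pos
    intro i hi
    apply Finset.prod_pos
    intro j hj
    rw [Finset.mem_Ioo] at hj
    have := hdec i j hj.1 hj.2
    omega
  have hdvd : hookProd lam k * W ∣ n ! * W := by
    rw [hrow]
    calc (∏ i ∈ Finset.range k, (betaSt lam k i)!) ∣
        n ! * ∏ i ∈ Finset.range k, ∏ j ∈ Finset.Ioo i k, (betaSt lam k i - betaSt lam k j) :=
          hC
      _ = n ! * W := by rw [hW]
  exact (Nat.mul_dvd_mul_iff_right hWpos).mp hdvd



lemma ppart_mul {p m n : ℕ} (hm : m ≠ 0) (hn : n ≠ 0) :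
    ppart p (m * n) = ppart p m * ppart p n := by
  simp [ppart, Nat.factorization_mul hm hn, pow_add]

lemma ppart_of_not_dvd {p m : ℕ} (h : ¬ p ∣ m) : ppart p m = 1 := by
  simp [ppart, Nat.factorization_eq_zero_of_not_dvd h]

lemma ppart_p_mul {p m : ℕ} (hp : p.Prime) (h : m ≠ 0) :
    ppart p (p * m) = p * ppart p m := by
  have hfac : (p * m).factorization p = m.factorization p + 1 := by
    rw [Nat.factorization_mul hp.ne_zero h]
    simp [hp.factorization]
    ring
  simp [ppart, hfac, pow_succ]
  ring

lemma ppart_multiset_prod (p : ℕ) (M : Multiset ℕ) (h : ∀ x ∈ M, x ≠ 0) :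
    ppart p M.prod = (M.map (ppart p)).prod := by
  induction M using Multiset.induction_on with
  | empty => simp [ppart]
  | cons a s ih =>
    have ha : a ≠ 0 := h a (Multiset.mem_cons_self a s)
    have hs : ∀ x ∈ s, x ≠ 0 := fun x hx => h x (Multiset.mem_cons_of_mem hx)
    have hsprod : s.prod ≠ 0 := by
      intro h0
      rw [Multiset.prod_eq_zero_iff] at h0
      exact hs 0 h0 rfl
    rw [Multiset.prod_cons, Multiset.map_cons, Multiset.prod_cons, ppart_mul ha hsprod, ih hs]

lemma prod_map_const_mul {α : Type*} (p : ℕ) (C : Multiset α) (f : α → ℕ) :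
    (C.map (fun q => p * f q)).prod = p ^ (Multiset.card C) * (C.map f).prod := by
  induction C using Multiset.induction_on with
  | empty => simp
  | cons a s ih =>
    simp only [Multiset.map_cons, Multiset.prod_cons, ih, Multiset.card_cons, pow_succ]
    ring

/-- Let `lam` be a partition with `p`-quotient
`(mu 0, …, mu (p-1))`, where `mu i` is a partition of `c i` and
`∑ c i = w`; the `p`-quotient property is encoded by the standard bijection
between the hooks of `lam` of length divisible by `p` and the hooks of the
`mu i` (a hook of length `rp` corresponding to a hook of length `r`).
Then `∏_{α ∈ lam} [h_α]_p = p^w · ∏_i [c_i! / dim S^{mu i}]_p`. -/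
theorem stmt_18 (p : ℕ) (hp : p.Prime) (lam : ℕ → ℕ) (k w : ℕ)
    (hanti : ∀ i j, i ≤ j → lam j ≤ lam i)
    (hsupp : ∀ i, lam i ≠ 0 ↔ i < k)
    (mu : Fin p → ℕ → ℕ) (kq : Fin p → ℕ) (c : Fin p → ℕ)
    (hmuanti : ∀ i, ∀ a b, a ≤ b → mu i b ≤ mu i a)
    (hmusupp : ∀ i a, mu i a ≠ 0 ↔ a < kq i)
    (hci : ∀ i, ∑ a ∈ Finset.range (kq i), mu i a = c i)
    (hw : ∑ i, c i = w)
    -- the multiset of hooks of lam divisible by p corresponds to the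
    -- hooks of the p-quotient, scaled by p
    (hquot : Multiset.filter (fun h => p ∣ h)
        (Multiset.map (hookLen lam k) (cellsOf lam k).val)
      = ∑ i : Fin p, Multiset.map (fun h => p * h)
          (Multiset.map (hookLen (mu i) (kq i)) (cellsOf (mu i) (kq i)).val)) :
    ppart p (∏ q ∈ cellsOf lam k, hookLen lam k q)
      = p ^ w * ∏ i : Fin p, ppart p ((c i).factorial / dimSpecht (mu i) (kq i) (c i)) := by
  have hLprod : (∏ q ∈ cellsOf lam k, hookLen lam k q)
      = (Multiset.map (hookLen lam k) (cellsOf lam k).val).prod :=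
    Finset.prod_eq_multiset_prod _ _
  set L := Multiset.map (hookLen lam k) (cellsOf lam k).val with hL
  have hposL : ∀ x ∈ L, x ≠ 0 := by
    intro x hx
    rw [hL, Multiset.mem_map] at hx
    obtain ⟨q, hq, rfl⟩ := hx
    exact hook_ne_zero hanti (Finset.mem_def.mpr hq)
  rw [hLprod, ppart_multiset_prod p L hposL]
  have hsplit : (L.map (ppart p)).prod
      = ((L.filter (fun h => p ∣ h)).map (ppart p)).prod
        * ((L.filter (fun h => ¬ p ∣ h)).map (ppart p)).prod := by
    conv_lhs => rw [← Multiset.filter_add_not (fun h => p ∣ h) L]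
    rw [Multiset.map_add, Multiset.prod_add]
  have hnd : ((L.filter (fun h => ¬ p ∣ h)).map (ppart p)).prod = 1 := by
    apply Multiset.prod_eq_one
    intro x hx
    rw [Multiset.mem_map] at hx
    obtain ⟨y, hy, rfl⟩ := hx
    rw [Multiset.mem_filter] at hy
    exact ppart_of_not_dvd hy.2
  rw [hsplit, hnd, mul_one, hquot]
  have hmapsum : Multiset.map (ppart p) (∑ i : Fin p, Multiset.map (fun h => p * h)
      (Multiset.map (hookLen (mu i) (kq i)) (cellsOf (mu i) (kq i)).val))
      = ∑ i : Fin p, Multiset.map (ppart p) (Multiset.map (fun h => p * h)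
        (Multiset.map (hookLen (mu i) (kq i)) (cellsOf (mu i) (kq i)).val)) :=
    map_sum (Multiset.mapAddMonoidHom (ppart p)) _ _
  rw [hmapsum, Multiset.prod_sum]
  have hterm : ∀ i : Fin p,
      (Multiset.map (ppart p) (Multiset.map (fun h => p * h)
        (Multiset.map (hookLen (mu i) (kq i)) (cellsOf (mu i) (kq i)).val))).prod
      = p ^ (c i) * ppart p (hookProd (mu i) (kq i)) := by
    intro i
    rw [Multiset.map_map, Multiset.map_map]
    have hcongr : Multiset.map ((ppart p ∘ fun h => p * h) ∘ hookLen (mu i) (kq i))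
          (cellsOf (mu i) (kq i)).val
        = Multiset.map (fun q => p * ppart p (hookLen (mu i) (kq i) q))
          (cellsOf (mu i) (kq i)).val := by
      apply Multiset.map_congr rfl
      intro q hq
      exact ppart_p_mul hp (hook_ne_zero (hmuanti i) (Finset.mem_def.mpr hq))
    rw [hcongr, prod_map_const_mul]
    congr 1
    · congr 1
      have hcard : Multiset.card (cellsOf (mu i) (kq i)).val = (cellsOf (mu i) (kq i)).card :=
        rfl
      rw [hcard, card_cellsOf, hci i]
    · have hposmu : ∀ x ∈ Multiset.map (hookLen (mu i) (kq i)) (cellsOf (mu i) (kq i)).val,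
          x ≠ 0 := by
        intro x hx
        rw [Multiset.mem_map] at hx
        obtain ⟨q, hq, rfl⟩ := hx
        exact hook_ne_zero (hmuanti i) (Finset.mem_def.mpr hq)
      rw [hookProd, Finset.prod_eq_multiset_prod, ppart_multiset_prod p _ hposmu,
        Multiset.map_map]
      rfl
  rw [Finset.prod_congr rfl (fun i _ => hterm i)]
  have hRHS : ∀ i : Fin p,
      (c i).factorial / dimSpecht (mu i) (kq i) (c i) = hookProd (mu i) (kq i) := by
    intro i
    have hdvd : hookProd (mu i) (kq i) ∣ (c i).factorial := by
      have := hookProd_dvd_factorial (hmuanti i) (k := kq i)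
      rwa [hci i] at this
    rw [dimSpecht]
    exact Nat.div_div_self hdvd (Nat.factorial_ne_zero _)
  rw [Finset.prod_mul_distrib, Finset.prod_pow_eq_pow_sum, hw]
  congr 1
  apply Finset.prod_congr rfl
  intro i _
  rw [hRHS i]
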